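/- For any function f ∈ H¹(0,1) and any ε ∈ (0,1), one has ‖f‖²_{L²(0,1)} ≤ (C/ε) ∫₀¹ (1-s) f(s)² ds + C ε² ‖f‖²_{H¹(0,1)}, where C is a universal constant. -/

import Mathlib

/-!
On `[1 - 2ε, 1 - ε]` the weight `1 - s` is at least `ε`, so some point `t` there satisfies
`(1 - t) f(t)² ≤ ε⁻¹ ∫ (1 - s) f²`; left of `t` the weight is again at least `ε`. Right of `t`,
differentiating `(1 - s) f(s)²` and using `2ab ≤ a²/2 + 2b²` gives the scaled Hardy bound
`∫ₜ¹ f² ≤ 2 (1 - t) f(t)² + 4 (1 - t)² ∫ₜ¹ f'²` with `1 - t ≤ 2ε`. For `ε > 1/2` the claim is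
trivial since `16 ε² ≥ 1`.
-/

open MeasureTheory Set intervalIntegral

theorem integral_mono_interval_of_nonneg {g : ℝ → ℝ} {a b c d : ℝ} (hca : c ≤ a) (hab : a ≤ b)
    (hbd : b ≤ d) (hg : IntervalIntegrable g volume c d) (hg₀ : ∀ s ∈ Ioc c d, 0 ≤ g s) :
    ∫ s in a..b, g s ≤ ∫ s in c..d, g s :=
  integral_mono_interval hca hab hbd
    ((ae_restrict_iff' measurableSet_Ioc).2 (ae_of_all _ hg₀)) hg

theorem exists_mem_Icc_mul_le_integral {g : ℝ → ℝ} {a b : ℝ} (hab : a < b)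
    (hg : IntervalIntegrable g volume a b) : ∃ t ∈ Icc a b, (b - a) * g t ≤ ∫ s in a..b, g s := by
  obtain ⟨t, ht, hle⟩ := exists_le_setAverage (s := Ioc a b) (by simp [hab]) (by simp)
    (hg.def'.mono_set (uIoc_of_le hab.le).symm.subset)
  rw [setAverage_eq, Real.volume_real_Ioc_of_le hab.le, ← integral_of_le hab.le, smul_eq_mul,
    le_inv_mul_iff₀ (sub_pos.2 hab)] at hle
  exact ⟨t, Ioc_subset_Icc_self ht, hle⟩

theorem integral_le_div_integral_one_sub_mul {g : ℝ → ℝ} {ε t : ℝ} (hε : 0 < ε) (ht₀ : 0 ≤ t)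
    (ht : t ≤ 1 - ε) (hg : IntervalIntegrable g volume 0 1) (hg₀ : ∀ s ∈ Icc (0 : ℝ) 1, 0 ≤ g s) :
    ∫ s in (0 : ℝ)..t, g s ≤ (∫ s in (0 : ℝ)..1, (1 - s) * g s) / ε := by
  have hweight : IntervalIntegrable (fun s => (1 - s) * g s) volume 0 1 :=
    hg.continuousOn_mul (by fun_prop)
  have hsub : uIcc 0 t ⊆ uIcc (0 : ℝ) 1 :=
    uIcc_subset_uIcc_left (mem_uIcc_of_le ht₀ (by linarith))
  calc ∫ s in (0 : ℝ)..t, g s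
      ≤ ∫ s in (0 : ℝ)..t, (1 - s) * g s / ε := by
        refine integral_mono_on ht₀ (hg.mono_set hsub) ((hweight.mono_set hsub).div_const ε)
          fun s hs => ?_
        rw [le_div_iff₀ hε]
        nlinarith [hg₀ s ⟨hs.1, by linarith [hs.2]⟩, hs.2]
    _ = (∫ s in (0 : ℝ)..t, (1 - s) * g s) / ε := intervalIntegral.integral_div _ _
    _ ≤ (∫ s in (0 : ℝ)..1, (1 - s) * g s) / ε := by
        gcongr
        exact integral_mono_interval_of_nonneg le_rfl ht₀ (by linarith) hweight
          fun s hs => mul_nonneg (sub_nonneg.2 hs.2) (hg₀ s (Ioc_subset_Icc_self hs))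

theorem integral_sq_le_left_sq_add_integral_deriv_sq {f f' : ℝ → ℝ} {t c : ℝ} (htc : t ≤ c)
    (hf : ∀ x ∈ Icc t c, HasDerivAt f (f' x) x)
    (hf2 : IntegrableOn (fun s => f s ^ 2) (Icc t c))
    (hf'2 : IntegrableOn (fun s => f' s ^ 2) (Icc t c)) :
    ∫ s in t..c, f s ^ 2 ≤ 2 * (c - t) * f t ^ 2 + 4 * (c - t) ^ 2 * ∫ s in t..c, f' s ^ 2 := by
  have hG : ∀ x ∈ Icc t c,
      HasDerivAt (fun s => (c - s) * f s ^ 2) ((c - x) * (2 * f x * f' x) - f x ^ 2) x := by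
    intro x hx
    refine (((hasDerivAt_id' x).const_sub c).fun_mul ((hf x hx).fun_pow 2)).congr_deriv ?_
    norm_num
    ring
  have hG' : ∀ x ∈ Icc t c,
      (c - x) * (2 * f x * f' x) - f x ^ 2 ≤ 2 * (c - t) ^ 2 * f' x ^ 2 - f x ^ 2 / 2 := by
    intro x hx
    have h₀ : 0 ≤ c - x := sub_nonneg.2 hx.2
    have h₁ : c - x ≤ c - t := sub_le_sub_left hx.1 c
    nlinarith [sq_nonneg (f x - 2 * (c - x) * f' x), mul_le_mul h₁ h₁ h₀ (h₀.trans h₁),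
      sq_nonneg (f' x)]
  have hφ : IntegrableOn (fun x => 2 * (c - t) ^ 2 * f' x ^ 2 - f x ^ 2 / 2) (Icc t c) :=
    (hf'2.const_mul _).sub (hf2.div_const 2)
  -- Only an upper bound for the derivative is integrated, so `f * f'` need not be integrable.
  have key := sub_le_integral_of_hasDeriv_right_of_le htc
    (fun x hx => (hG x hx).continuousAt.continuousWithinAt)
    (fun x hx => (hG x (Ioo_subset_Icc_self hx)).hasDerivWithinAt) hφ
    (fun x hx => hG' x (Ioo_subset_Icc_self hx))
  rw [← intervalIntegrable_iff_integrableOn_Icc_of_le htc] at hf2 hf'2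
  rw [intervalIntegral.integral_sub (hf'2.const_mul _) (hf2.div_const 2),
    intervalIntegral.integral_div, intervalIntegral.integral_const_mul, sub_self, zero_mul] at key
  linarith

theorem integral_sq_le_div_mul_integral_one_sub_mul_sq_add {f f' : ℝ → ℝ} {ε : ℝ} (hε : 0 < ε)
    (hε₂ : ε ≤ 1 / 2) (hf : ∀ x ∈ Icc 0 1, HasDerivAt f (f' x) x)
    (hf2 : IntegrableOn (fun s => f s ^ 2) (Icc 0 1))
    (hf'2 : IntegrableOn (fun s => f' s ^ 2) (Icc 0 1)) :
    ∫ s in (0 : ℝ)..1, f s ^ 2 ≤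
      3 / ε * (∫ s in (0 : ℝ)..1, (1 - s) * f s ^ 2) +
        16 * ε ^ 2 * ∫ s in (0 : ℝ)..1, f' s ^ 2 := by
  set W := ∫ s in (0 : ℝ)..1, (1 - s) * f s ^ 2
  have hf2' := (intervalIntegrable_iff_integrableOn_Icc_of_le zero_le_one).2 hf2
  have hf'2' := (intervalIntegrable_iff_integrableOn_Icc_of_le zero_le_one).2 hf'2
  have hweight : IntervalIntegrable (fun s => (1 - s) * f s ^ 2) volume 0 1 :=
    hf2'.continuousOn_mul (by fun_prop)
  obtain ⟨t, ⟨hat, htb⟩, hmean⟩ := exists_mem_Icc_mul_le_integral (a := 1 - 2 * ε) (b := 1 - ε)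
    (by linarith) (hweight.mono_set (uIcc_subset_uIcc (mem_uIcc_of_le (by linarith) (by linarith))
      (mem_uIcc_of_le (by linarith) (by linarith))))
  have ht₀ : 0 ≤ t := by linarith
  have ht₁ : t ≤ 1 := by linarith
  have hft : (1 - t) * f t ^ 2 ≤ W / ε := by
    rw [le_div_iff₀ hε, mul_comm]
    rw [show 1 - ε - (1 - 2 * ε) = ε by ring] at hmean
    exact hmean.trans (integral_mono_interval_of_nonneg (by linarith) (by linarith)
      (by linarith) hweight fun s hs => mul_nonneg (sub_nonneg.2 hs.2) (sq_nonneg _))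
  have hleft : ∫ s in (0 : ℝ)..t, f s ^ 2 ≤ W / ε :=
    integral_le_div_integral_one_sub_mul hε ht₀ htb hf2' fun s _ => sq_nonneg _
  have hright :
      ∫ s in t..1, f s ^ 2 ≤ 2 * (W / ε) + 16 * ε ^ 2 * ∫ s in (0 : ℝ)..1, f' s ^ 2 := by
    have hsub : Icc t 1 ⊆ Icc (0 : ℝ) 1 := Icc_subset_Icc ht₀ le_rfl
    have hsq : (1 - t) ^ 2 ≤ 4 * ε ^ 2 := by nlinarith
    have hT' : ∫ s in t..1, f' s ^ 2 ≤ ∫ s in (0 : ℝ)..1, f' s ^ 2 :=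
      integral_mono_interval_of_nonneg ht₀ ht₁ le_rfl hf'2' fun s _ => sq_nonneg _
    have hT'₀ : 0 ≤ ∫ s in t..1, f' s ^ 2 := integral_nonneg ht₁ fun s _ => sq_nonneg _
    nlinarith [integral_sq_le_left_sq_add_integral_deriv_sq ht₁ (fun x hx => hf x (hsub hx))
      (hf2.mono_set hsub) (hf'2.mono_set hsub), mul_le_mul hsq hT' hT'₀ (by positivity)]
  have h3W : 3 / ε * W = 3 * (W / ε) := by ring
  rw [← integral_add_adjacent_intervals (b := t) (hf2'.mono_set ?_) (hf2'.mono_set ?_)]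
  · linarith
  · exact uIcc_subset_uIcc_left (mem_uIcc_of_le ht₀ ht₁)
  · exact uIcc_subset_uIcc_right (mem_uIcc_of_le ht₀ ht₁)

/-- The unweighted L²(0,1) norm is controlled by a degenerate-weight L² norm plus a small
multiple of the H¹ norm: ‖f‖²_{L²} ≤ (C/ε) ∫₀¹ (1-s) f² + C ε² ‖f‖²_{H¹}. -/
theorem weighted_L2_H1_interpolation :
    ∃ C > 0, ∀ ε ∈ Set.Ioo (0:ℝ) 1, ∀ f f' : ℝ → ℝ,
      (∀ x ∈ Set.Icc (0:ℝ) 1, HasDerivAt f (f' x) x) →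
      IntegrableOn (fun s => f s ^ 2) (Set.Icc (0:ℝ) 1) →
      IntegrableOn (fun s => f' s ^ 2) (Set.Icc (0:ℝ) 1) →
      (∫ s in Set.Ioo (0:ℝ) 1, f s ^ 2) ≤
        C / ε * (∫ s in Set.Ioo (0:ℝ) 1, (1 - s) * f s ^ 2)
          + C * ε ^ 2 * (∫ s in Set.Ioo (0:ℝ) 1, (f s ^ 2 + f' s ^ 2)) := by
  refine ⟨16, by norm_num, ?_⟩
  rintro ε ⟨hε₀, -⟩ f f' hf hf2 hf'2
  have hIoo : ∀ g : ℝ → ℝ, ∫ s in Ioo (0 : ℝ) 1, g s = ∫ s in (0 : ℝ)..1, g s := fun g => by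
    rw [integral_of_le zero_le_one, integral_Ioc_eq_integral_Ioo]
  rw [hIoo, hIoo, hIoo, intervalIntegral.integral_add
    ((intervalIntegrable_iff_integrableOn_Icc_of_le zero_le_one).2 hf2)
    ((intervalIntegrable_iff_integrableOn_Icc_of_le zero_le_one).2 hf'2)]
  have hT : 0 ≤ ∫ s in (0 : ℝ)..1, f s ^ 2 := integral_nonneg zero_le_one fun s _ => sq_nonneg _
  have hT' : 0 ≤ ∫ s in (0 : ℝ)..1, f' s ^ 2 := integral_nonneg zero_le_one fun s _ => sq_nonneg _
  have hW : 0 ≤ ∫ s in (0 : ℝ)..1, (1 - s) * f s ^ 2 :=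
    integral_nonneg zero_le_one fun s hs => mul_nonneg (sub_nonneg.2 hs.2) (sq_nonneg _)
  rcases le_or_gt ε (1 / 2) with hε₂ | hε₂
  · have hmain := integral_sq_le_div_mul_integral_one_sub_mul_sq_add hε₀ hε₂ hf hf2 hf'2
    have h316 : 3 / ε * (∫ s in (0 : ℝ)..1, (1 - s) * f s ^ 2) ≤
        16 / ε * ∫ s in (0 : ℝ)..1, (1 - s) * f s ^ 2 := by
      gcongr
      norm_num
    nlinarith [mul_nonneg (sq_nonneg ε) hT]
  · have hW' : 0 ≤ 16 / ε * ∫ s in (0 : ℝ)..1, (1 - s) * f s ^ 2 := by positivity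
    nlinarith [mul_nonneg (sq_nonneg ε) hT', mul_le_mul_of_nonneg_right
      (show 1 ≤ 16 * ε ^ 2 by nlinarith) hT]
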